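/- Let c ∈ (F³)ˣ and a ∈ (F²)ˣ be units, and set c' = c·Δ¹(a) ∈ (F³)ˣ. Then for all x, y ∈ F²: (x·a⁻¹) ⋆_{c'} (y·a⁻¹) = (x ⋆_c y)·a⁻¹. Consequently, the map m ↦ m·a⁻¹ (multiplication in the commutative ring F²) is a k-algebra isomorphism from A(F,c) onto A(F,c'). -/

import Mathlib

open TensorProduct

universe u

variable (k F : Type u) [Field k] [CommRing F] [Algebra k F]

/-- `ε₀ : F ⊗ F → F ⊗ F ⊗ F`, `x ⊗ y ↦ 1 ⊗ x ⊗ y`. -/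
noncomputable def eps0 : F ⊗[k] F →ₐ[k] F ⊗[k] (F ⊗[k] F) :=
  Algebra.TensorProduct.includeRight

/-- `ε₁ : F ⊗ F → F ⊗ F ⊗ F`, `x ⊗ y ↦ x ⊗ 1 ⊗ y`. -/
noncomputable def eps1 : F ⊗[k] F →ₐ[k] F ⊗[k] (F ⊗[k] F) :=
  Algebra.TensorProduct.map (AlgHom.id k F) Algebra.TensorProduct.includeRight

/-- `ε₂ : F ⊗ F → F ⊗ F ⊗ F`, `x ⊗ y ↦ x ⊗ y ⊗ 1`. -/
noncomputable def eps2 : F ⊗[k] F →ₐ[k] F ⊗[k] (F ⊗[k] F) :=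
  Algebra.TensorProduct.map (AlgHom.id k F) Algebra.TensorProduct.includeLeft

/-- `F³` regarded as an `F²`-algebra via `ε₁`. -/
noncomputable instance : Algebra (F ⊗[k] F) (F ⊗[k] (F ⊗[k] F)) :=
  (eps1 k F).toRingHom.toAlgebra

/-- The trace of `F³` as an `F²`-algebra (via `ε₁`). -/
noncomputable def trF3 : F ⊗[k] (F ⊗[k] F) →ₗ[F ⊗[k] F] F ⊗[k] F :=
  Algebra.trace (F ⊗[k] F) (F ⊗[k] (F ⊗[k] F))

/-- The Brauer-factor-set multiplication `⋆_c` on `F²` attached to `c ∈ F³`,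
`x ⋆_c y = Tr(ε₂(x)·c·ε₀(y))`. The `k`-vector space `F²` with this multiplication
is the algebra `A(F,c)`. -/
noncomputable def starMul (c : F ⊗[k] (F ⊗[k] F)) (x y : F ⊗[k] F) : F ⊗[k] F :=
  trF3 k F (eps2 k F x * c * eps0 k F y)


/-- The Amitsur differential `Δ¹(α) = ε₀(α)·ε₁(α)⁻¹·ε₂(α)` on units of `F²`. -/
noncomputable def delta1 (a : (F ⊗[k] F)ˣ) : (F ⊗[k] (F ⊗[k] F))ˣ :=
  Units.map (eps0 k F).toRingHom.toMonoidHom a *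
    (Units.map (eps1 k F).toRingHom.toMonoidHom a)⁻¹ *
    Units.map (eps2 k F).toRingHom.toMonoidHom a

theorem trF3_eps1_mul (b : F ⊗[k] F) (z : F ⊗[k] (F ⊗[k] F)) :
    trF3 k F (eps1 k F b * z) = b * trF3 k F z := by
  rw [show eps1 k F b * z = b • z from (Algebra.smul_def b z).symm, map_smul, smul_eq_mul]

theorem coe_delta1 (a : (F ⊗[k] F)ˣ) :
    (delta1 k F a : F ⊗[k] (F ⊗[k] F)) =
      eps0 k F a * eps1 k F ↑a⁻¹ * eps2 k F a := by
  simp [delta1, Units.coe_map_inv]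

theorem eps2_mul_delta1_mul_eps0 (c : F ⊗[k] (F ⊗[k] F)) (a : (F ⊗[k] F)ˣ)
    (x y : F ⊗[k] F) :
    eps2 k F (x * ↑a⁻¹) * (c * delta1 k F a) * eps0 k F (y * ↑a⁻¹) =
      eps1 k F ↑a⁻¹ * (eps2 k F x * c * eps0 k F y) := by
  have h0 : eps0 k F ↑a⁻¹ * eps0 k F a = 1 := by rw [← map_mul, Units.inv_mul, map_one]
  have h2 : eps2 k F ↑a⁻¹ * eps2 k F a = 1 := by rw [← map_mul, Units.inv_mul, map_one]
  rw [map_mul, map_mul, coe_delta1]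
  -- the ε₀- and ε₂-factors of Δ¹(a) cancel against those of a⁻¹, leaving ε₁(a⁻¹)
  set t := eps1 k F ↑a⁻¹ * (eps2 k F x * c * eps0 k F y)
  linear_combination (t * eps0 k F a * eps0 k F ↑a⁻¹) * h2 + t * h0

theorem starMul_mul_delta1 (c : F ⊗[k] (F ⊗[k] F)) (a : (F ⊗[k] F)ˣ) (x y : F ⊗[k] F) :
    starMul k F (c * delta1 k F a) (x * ↑a⁻¹) (y * ↑a⁻¹) = starMul k F c x y * ↑a⁻¹ := by
  rw [starMul, eps2_mul_delta1_mul_eps0, trF3_eps1_mul, mul_comm, starMul]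

theorem starMul_mul_inv_unit
    (c : (F ⊗[k] (F ⊗[k] F))ˣ) (a : (F ⊗[k] F)ˣ)
    (c' : (F ⊗[k] (F ⊗[k] F))ˣ) (hc' : c' = c * delta1 k F a) :
    (∀ x y : F ⊗[k] F,
      starMul k F (c' : F ⊗[k] (F ⊗[k] F)) (x * ((a⁻¹ : (F ⊗[k] F)ˣ) : F ⊗[k] F))
          (y * ((a⁻¹ : (F ⊗[k] F)ˣ) : F ⊗[k] F)) =
        starMul k F (c : F ⊗[k] (F ⊗[k] F)) x y * ((a⁻¹ : (F ⊗[k] F)ˣ) : F ⊗[k] F)) ∧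
    Function.Bijective (fun m : F ⊗[k] F => m * ((a⁻¹ : (F ⊗[k] F)ˣ) : F ⊗[k] F)) := by
  subst hc'
  exact ⟨starMul_mul_delta1 k F c a, (Units.mulRight a⁻¹).bijective⟩
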